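/- arXiv:1904.00608 — 3 statements merged into one kernel-verified Lean document; each statement's English description precedes it below -/
import Mathlib

section
/- Let $f : [\tau_-, \tau_+] \to \mathbb{C}$ be continuous with $\tau_- < 0 < \tau_+$, and let $n \ge 4$ be an integer. Define $N_\epsilon = \int_{-\zeta}^{\zeta} |t - i\epsilon|^{-(n-2)} dt$ for fixed small $\zeta \in (0, \min(-\tau_-, \tau_+))$. Then $\lim_{\zeta \to 0^+} \limsup_{\epsilon \to 0^+} \left| N_\epsilon^{-1} \int_{\tau_-}^{\tau_+} f(t)\, |t-i\epsilon|^{-(n-2)}\, dt - f(0) \right| = 0$. In particular, if $\int_{\tau_-}^{\tau_+} f(t)\, |t - i\epsilon|^{-(n-2)} dt = 0$ for all $\epsilon > 0$, then $f(0) = 0$. -/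
open intervalIntegral Set Filter

private lemma wcont (ε p : ℝ) (hε : ε ≠ 0) :
    Continuous fun t : ℝ => (t ^ 2 + ε ^ 2) ^ (-p) := by
  apply Continuous.rpow_const (by continuity)
  intro t; left; positivity

private lemma Npos (ζ ε p : ℝ) (hζ : 0 < ζ) (hε : ε ≠ 0) :
    0 < ∫ t in (-ζ)..ζ, (t ^ 2 + ε ^ 2) ^ (-p) := by
  apply intervalIntegral_pos_of_pos ((wcont ε p hε).intervalIntegrable _ _) ?_ (by linarith)
  intro x; positivity

private lemma Nlow (ζ ε p : ℝ) (hζ : 0 < ζ) (hε : 0 < ε) (hεζ : ε ≤ ζ) (hp : 0 ≤ p) :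
    2 ^ (1 - p) * ε ^ (1 - 2 * p) ≤ ∫ t in (-ζ)..ζ, (t ^ 2 + ε ^ 2) ^ (-p) := by
  have hw := wcont ε p hε.ne'
  have h1 : ∫ t in (-ζ)..ζ, (t ^ 2 + ε ^ 2) ^ (-p)
      = (∫ t in (-ζ)..(-ε), (t ^ 2 + ε ^ 2) ^ (-p))
        + ((∫ t in (-ε)..ε, (t ^ 2 + ε ^ 2) ^ (-p))
        + ∫ t in ε..ζ, (t ^ 2 + ε ^ 2) ^ (-p)) := by
    rw [integral_add_adjacent_intervals (hw.intervalIntegrable _ _) (hw.intervalIntegrable _ _),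
      integral_add_adjacent_intervals (hw.intervalIntegrable _ _) (hw.intervalIntegrable _ _)]
  have htail1 : 0 ≤ ∫ t in (-ζ)..(-ε), (t ^ 2 + ε ^ 2) ^ (-p) :=
    intervalIntegral.integral_nonneg (by linarith) (fun t _ => by positivity)
  have htail2 : 0 ≤ ∫ t in ε..ζ, (t ^ 2 + ε ^ 2) ^ (-p) :=
    intervalIntegral.integral_nonneg (by linarith) (fun t _ => by positivity)
  have hmid : 2 * ε * (2 * ε ^ 2) ^ (-p) ≤ ∫ t in (-ε)..ε, (t ^ 2 + ε ^ 2) ^ (-p) := by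
    have : ∫ t in (-ε)..ε, (2 * ε ^ 2 : ℝ) ^ (-p) = 2 * ε * (2 * ε ^ 2) ^ (-p) := by
      rw [intervalIntegral.integral_const, smul_eq_mul]; ring
    rw [← this]
    apply intervalIntegral.integral_mono_on (by linarith)
      (intervalIntegrable_const) (hw.intervalIntegrable _ _)
    intro t ht
    apply Real.rpow_le_rpow_of_nonpos (by positivity) ?_ (by linarith)
    have h1 := ht.1; have h2 := ht.2
    nlinarith [sq_nonneg (t - ε), sq_nonneg (t + ε)]
  have heq : 2 * ε * (2 * ε ^ 2) ^ (-p) = 2 ^ (1 - p) * ε ^ (1 - 2 * p) := by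
    have h2 : (2 * ε ^ 2 : ℝ) ^ (-p) = 2 ^ (-p) * ε ^ (-(2 * p)) := by
      rw [Real.mul_rpow (by norm_num) (by positivity), ← Real.rpow_natCast ε 2,
        ← Real.rpow_mul hε.le, show ((2:ℕ):ℝ) * -p = -(2 * p) by push_cast; ring]
    rw [h2, Real.rpow_sub (by norm_num : (0:ℝ) < 2), Real.rpow_sub hε, Real.rpow_one,
      Real.rpow_one, Real.rpow_neg (by norm_num : (0:ℝ) ≤ 2), Real.rpow_neg hε.le]
    field_simp
  linarith [heq ▸ hmid]

private lemma Ninv_tendsto (ζ p : ℝ) (hζ : 0 < ζ) (hp : 1 ≤ p) :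
    Tendsto (fun ε : ℝ => (∫ t in (-ζ)..ζ, (t ^ 2 + ε ^ 2) ^ (-p))⁻¹)
      (nhdsWithin 0 (Set.Ioi 0)) (nhds 0) := by
  have hg : Tendsto (fun ε : ℝ => 2 ^ (p - 1) * ε ^ (2 * p - 1)) (nhdsWithin 0 (Set.Ioi 0))
      (nhds 0) := by
    have : Tendsto (fun ε : ℝ => ε ^ (2 * p - 1)) (nhds 0) (nhds 0) := by
      have h := (Real.continuousAt_rpow_const 0 (2 * p - 1) (Or.inr (by linarith))).tendsto
      simpa [Real.zero_rpow (by linarith : (2:ℝ) * p - 1 ≠ 0)] using h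
    simpa using ((this.const_mul (2 ^ (p - 1) : ℝ)).mono_left nhdsWithin_le_nhds)
  apply squeeze_zero' ?_ ?_ hg
  · filter_upwards [self_mem_nhdsWithin] with ε hε
    exact (inv_nonneg).2 (Npos ζ ε p hζ (ne_of_gt hε)).le
  · filter_upwards [self_mem_nhdsWithin, Ioo_mem_nhdsGT_of_mem (by constructor <;> linarith : (0:ℝ) ∈ Set.Ico 0 ζ)] with ε hε hε2
    have hε' : (0:ℝ) < ε := hε
    have hlow := Nlow ζ ε p hζ hε' hε2.2.le (by linarith)
    have hlowpos : 0 < 2 ^ (1 - p) * ε ^ (1 - 2 * p) := by positivity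
    have := inv_anti₀ hlowpos hlow
    apply this.trans
    rw [mul_inv, ← Real.rpow_neg (by norm_num : (0:ℝ) ≤ 2), ← Real.rpow_neg hε'.le]
    ring_nf
    exact le_rfl

private lemma key_est (τm τp : ℝ) (f : ℝ → ℂ) (hf : ContinuousOn f (Set.Icc τm τp))
    (p : ℝ) (hp : 0 ≤ p) (M : ℝ) (hM : ∀ t ∈ Set.Icc τm τp, ‖f t‖ ≤ M)
    (ζ : ℝ) (hζ0 : 0 < ζ) (hζm : τm < -ζ) (hζp : ζ < τp)
    (η : ℝ) (hη : ∀ t ∈ Set.Icc (-ζ) ζ, ‖f t - f 0‖ ≤ η)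
    (ε : ℝ) (hε : 0 < ε) :
    ‖((((∫ t in (-ζ)..ζ, (t ^ 2 + ε ^ 2) ^ (-p))⁻¹ : ℝ) : ℂ) *
        ∫ t in τm..τp, f t * (((t ^ 2 + ε ^ 2) ^ (-p) : ℝ) : ℂ)) - f 0‖
      ≤ η + (∫ t in (-ζ)..ζ, (t ^ 2 + ε ^ 2) ^ (-p))⁻¹ * (M * (ζ ^ 2) ^ (-p) * (τp - τm)) := by
  have hτ : τm < τp := by linarith
  set w : ℝ → ℝ := fun t => (t ^ 2 + ε ^ 2) ^ (-p) with hw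
  have hwc : Continuous w := wcont ε p hε.ne'
  set N : ℝ := ∫ t in (-ζ)..ζ, w t with hN
  have hNpos : 0 < N := Npos ζ ε p hζ0 hε.ne'
  have hN0 : (N : ℂ) ≠ 0 := by exact_mod_cast hNpos.ne'
  have hwnn : ∀ t, 0 ≤ w t := fun t => Real.rpow_nonneg (by positivity) _
  have hwcC : Continuous fun t => ((w t : ℝ) : ℂ) := Complex.continuous_ofReal.comp hwc
  have hM0 : 0 ≤ M := le_trans (norm_nonneg _) (hM 0 ⟨by linarith, by linarith⟩)
  have hcnn : (0:ℝ) ≤ (ζ ^ 2) ^ (-p) := Real.rpow_nonneg (by positivity) _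
  have hmem : ∀ x : ℝ, τm ≤ x → x ≤ τp → x ∈ Set.Icc τm τp := fun x h1 h2 => ⟨h1, h2⟩
  have hsub : ∀ a b : ℝ, a ∈ Set.Icc τm τp → b ∈ Set.Icc τm τp →
      IntervalIntegrable (fun t => f t * ((w t : ℝ) : ℂ)) MeasureTheory.volume a b := by
    intro a b ha hb
    exact ((hf.mono (Set.uIcc_subset_Icc ha hb)).mul hwcC.continuousOn).intervalIntegrable
  have hmA := hmem τm le_rfl hτ.le
  have hmB := hmem (-ζ) (by linarith) (by linarith)
  have hmC := hmem ζ (by linarith) (by linarith)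
  have hmD := hmem τp hτ.le le_rfl
  have e1 : (∫ t in τm..(-ζ), f t * ((w t : ℝ) : ℂ)) + ∫ t in (-ζ)..τp, f t * ((w t : ℝ) : ℂ)
      = ∫ t in τm..τp, f t * ((w t : ℝ) : ℂ) :=
    integral_add_adjacent_intervals (hsub _ _ hmA hmB) (hsub _ _ hmB hmD)
  have e2 : (∫ t in (-ζ)..ζ, f t * ((w t : ℝ) : ℂ)) + ∫ t in ζ..τp, f t * ((w t : ℝ) : ℂ)
      = ∫ t in (-ζ)..τp, f t * ((w t : ℝ) : ℂ) :=
    integral_add_adjacent_intervals (hsub _ _ hmB hmC) (hsub _ _ hmC hmD)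
  have hNC : (∫ t in (-ζ)..ζ, ((w t : ℝ) : ℂ)) = (N : ℂ) := integral_ofReal
  have hconstInt : IntervalIntegrable (fun t => f 0 * ((w t : ℝ) : ℂ))
      MeasureTheory.volume (-ζ) ζ :=
    (Continuous.intervalIntegrable (by continuity) _ _)
  have hmid_sub : ∫ t in (-ζ)..ζ, (f t - f 0) * ((w t : ℝ) : ℂ)
      = (∫ t in (-ζ)..ζ, f t * ((w t : ℝ) : ℂ)) - f 0 * (N : ℂ) := by
    have : ∀ t : ℝ, (f t - f 0) * ((w t : ℝ) : ℂ)
        = f t * ((w t : ℝ) : ℂ) - f 0 * ((w t : ℝ) : ℂ) := fun t => by ring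
    rw [intervalIntegral.integral_congr (fun t _ => this t),
      intervalIntegral.integral_sub (hsub _ _ hmB hmC) hconstInt,
      intervalIntegral.integral_const_mul, hNC]
  have hid : (((N⁻¹ : ℝ) : ℂ) * ∫ t in τm..τp, f t * ((w t : ℝ) : ℂ)) - f 0
      = ((N⁻¹ : ℝ) : ℂ) * (∫ t in (-ζ)..ζ, (f t - f 0) * ((w t : ℝ) : ℂ))
        + ((N⁻¹ : ℝ) : ℂ) * ((∫ t in τm..(-ζ), f t * ((w t : ℝ) : ℂ))
          + ∫ t in ζ..τp, f t * ((w t : ℝ) : ℂ)) := by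
    rw [hmid_sub, ← e1, ← e2]
    push_cast
    field_simp
    ring
  rw [hid]
  have hb1 : ‖((N⁻¹ : ℝ) : ℂ) * (∫ t in (-ζ)..ζ, (f t - f 0) * ((w t : ℝ) : ℂ))‖ ≤ η := by
    rw [norm_mul, Complex.norm_real, Real.norm_eq_abs, abs_of_nonneg (inv_nonneg.2 hNpos.le)]
    have hle : ‖∫ t in (-ζ)..ζ, (f t - f 0) * ((w t : ℝ) : ℂ)‖
        ≤ ∫ t in (-ζ)..ζ, η * w t := by
      refine (intervalIntegral.norm_integral_le_integral_norm (by linarith)).trans ?_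
      apply intervalIntegral.integral_mono_on (by linarith)
      · exact (((hf.mono (Set.uIcc_subset_Icc hmB hmC)).sub continuousOn_const).mul
          hwcC.continuousOn).norm.intervalIntegrable
      · exact (continuous_const.mul hwc).intervalIntegrable _ _
      · intro t ht
        rw [norm_mul, Complex.norm_real, Real.norm_eq_abs, abs_of_nonneg (hwnn t)]
        exact mul_le_mul_of_nonneg_right (hη t ht) (hwnn t)
    rw [intervalIntegral.integral_const_mul] at hle
    calc N⁻¹ * ‖∫ t in (-ζ)..ζ, (f t - f 0) * ((w t : ℝ) : ℂ)‖
        ≤ N⁻¹ * (η * N) := by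
          apply mul_le_mul_of_nonneg_left hle (inv_nonneg.2 hNpos.le)
      _ = η := by field_simp
  have hηnn : 0 ≤ η := le_trans (norm_nonneg _) (hη 0 ⟨by linarith, by linarith⟩)
  have hwb : ∀ t : ℝ, ζ ^ 2 ≤ t ^ 2 → w t ≤ (ζ ^ 2) ^ (-p) := fun t ht =>
    Real.rpow_le_rpow_of_nonpos (by positivity) (by nlinarith [sq_nonneg ε]) (neg_nonpos.mpr hp)
  have hb2a : ‖∫ t in τm..(-ζ), f t * ((w t : ℝ) : ℂ)‖ ≤ M * (ζ ^ 2) ^ (-p) * (-ζ - τm) := by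
    have := intervalIntegral.norm_integral_le_of_norm_le_const
      (C := M * (ζ ^ 2) ^ (-p)) (f := fun t => f t * ((w t : ℝ) : ℂ)) (a := τm) (b := -ζ) ?_
    · calc ‖∫ t in τm..(-ζ), f t * ((w t : ℝ) : ℂ)‖ ≤ M * (ζ ^ 2) ^ (-p) * |(-ζ) - τm| := this
        _ = M * (ζ ^ 2) ^ (-p) * (-ζ - τm) := by rw [abs_of_pos (by linarith)]
    · intro t ht
      rw [Set.uIoc_of_le (by linarith : τm ≤ -ζ)] at ht
      rw [norm_mul, Complex.norm_real, Real.norm_eq_abs, abs_of_nonneg (hwnn t)]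
      have h1 : ζ ^ 2 ≤ t ^ 2 := by nlinarith [ht.1, ht.2]
      exact mul_le_mul (hM t ⟨ht.1.le, by linarith [ht.2]⟩) (hwb t h1) (hwnn t) hM0
  have hb2b : ‖∫ t in ζ..τp, f t * ((w t : ℝ) : ℂ)‖ ≤ M * (ζ ^ 2) ^ (-p) * (τp - ζ) := by
    have := intervalIntegral.norm_integral_le_of_norm_le_const
      (C := M * (ζ ^ 2) ^ (-p)) (f := fun t => f t * ((w t : ℝ) : ℂ)) (a := ζ) (b := τp) ?_
    · calc ‖∫ t in ζ..τp, f t * ((w t : ℝ) : ℂ)‖ ≤ M * (ζ ^ 2) ^ (-p) * |τp - ζ| := this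
        _ = M * (ζ ^ 2) ^ (-p) * (τp - ζ) := by rw [abs_of_pos (by linarith)]
    · intro t ht
      rw [Set.uIoc_of_le (by linarith : ζ ≤ τp)] at ht
      rw [norm_mul, Complex.norm_real, Real.norm_eq_abs, abs_of_nonneg (hwnn t)]
      have h1 : ζ ^ 2 ≤ t ^ 2 := by nlinarith [ht.1, ht.2]
      exact mul_le_mul (hM t ⟨by linarith [ht.1], ht.2⟩) (hwb t h1) (hwnn t) hM0
  have hb2 : ‖((N⁻¹ : ℝ) : ℂ) * ((∫ t in τm..(-ζ), f t * ((w t : ℝ) : ℂ))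
      + ∫ t in ζ..τp, f t * ((w t : ℝ) : ℂ))‖ ≤ N⁻¹ * (M * (ζ ^ 2) ^ (-p) * (τp - τm)) := by
    rw [norm_mul, Complex.norm_real, Real.norm_eq_abs, abs_of_nonneg (inv_nonneg.2 hNpos.le)]
    apply mul_le_mul_of_nonneg_left ?_ (inv_nonneg.2 hNpos.le)
    calc ‖(∫ t in τm..(-ζ), f t * ((w t : ℝ) : ℂ)) + ∫ t in ζ..τp, f t * ((w t : ℝ) : ℂ)‖
        ≤ ‖∫ t in τm..(-ζ), f t * ((w t : ℝ) : ℂ)‖ + ‖∫ t in ζ..τp, f t * ((w t : ℝ) : ℂ)‖ :=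
          norm_add_le _ _
      _ ≤ M * (ζ ^ 2) ^ (-p) * (-ζ - τm) + M * (ζ ^ 2) ^ (-p) * (τp - ζ) := add_le_add hb2a hb2b
      _ ≤ M * (ζ ^ 2) ^ (-p) * (τp - τm) := by nlinarith [mul_nonneg hM0 hcnn]
  calc ‖((N⁻¹ : ℝ) : ℂ) * (∫ t in (-ζ)..ζ, (f t - f 0) * ((w t : ℝ) : ℂ))
        + ((N⁻¹ : ℝ) : ℂ) * ((∫ t in τm..(-ζ), f t * ((w t : ℝ) : ℂ))
          + ∫ t in ζ..τp, f t * ((w t : ℝ) : ℂ))‖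
      ≤ ‖((N⁻¹ : ℝ) : ℂ) * (∫ t in (-ζ)..ζ, (f t - f 0) * ((w t : ℝ) : ℂ))‖
        + ‖((N⁻¹ : ℝ) : ℂ) * ((∫ t in τm..(-ζ), f t * ((w t : ℝ) : ℂ))
          + ∫ t in ζ..τp, f t * ((w t : ℝ) : ℂ))‖ := norm_add_le _ _
    _ ≤ η + N⁻¹ * (M * (ζ ^ 2) ^ (-p) * (τp - τm)) := add_le_add hb1 hb2

/-- Localization mechanism for the Jacobi weighted ray transform of the second kind:
with `N_ε = ∫_{-ζ}^{ζ} (t²+ε²)^{-(n-2)/2} dt`, the normalized transform converges to `f 0`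
in the iterated limit `ε → 0⁺`, `ζ → 0⁺`; in particular if the transform vanishes for all
`ε > 0` then `f 0 = 0`. -/
theorem stmt_5 (τm τp : ℝ) (h₁ : τm < 0) (h₂ : 0 < τp) (n : ℕ) (hn : 4 ≤ n)
    (f : ℝ → ℂ) (hf : ContinuousOn f (Set.Icc τm τp)) :
    Filter.Tendsto
      (fun ζ : ℝ =>
        Filter.limsup
          (fun ε : ℝ =>
            ‖((((∫ t in (-ζ)..ζ, (t ^ 2 + ε ^ 2) ^ (-(((n : ℝ) - 2) / 2)))⁻¹ : ℝ) : ℂ) *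
                ∫ t in τm..τp, f t * (((t ^ 2 + ε ^ 2) ^ (-(((n : ℝ) - 2) / 2)) : ℝ) : ℂ)) -
              f 0‖)
          (nhdsWithin 0 (Set.Ioi 0)))
      (nhdsWithin 0 (Set.Ioo 0 (min (-τm) τp))) (nhds 0) ∧
    ((∀ ε : ℝ, 0 < ε →
        (∫ t in τm..τp, f t * (((t ^ 2 + ε ^ 2) ^ (-(((n : ℝ) - 2) / 2)) : ℝ) : ℂ)) = 0) →
      f 0 = 0) := by
  set p : ℝ := ((n : ℝ) - 2) / 2 with hpdef
  have hn4 : (4:ℝ) ≤ (n:ℝ) := by exact_mod_cast hn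
  have hp1 : (1:ℝ) ≤ p := by rw [hpdef]; linarith
  have hp0 : (0:ℝ) ≤ p := by linarith
  set m : ℝ := min (-τm) τp with hm
  have hm0 : 0 < m := lt_min (by linarith) h₂
  obtain ⟨M, hM⟩ := isCompact_Icc.exists_bound_of_continuousOn hf
  set g : ℝ → ℝ → ℝ := fun ζ ε =>
    ‖((((∫ t in (-ζ)..ζ, (t ^ 2 + ε ^ 2) ^ (-p))⁻¹ : ℝ) : ℂ) *
        ∫ t in τm..τp, f t * (((t ^ 2 + ε ^ 2) ^ (-p) : ℝ) : ℂ)) - f 0‖ with hg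
  set L : ℝ → ℝ := fun ζ => limsup (g ζ) (nhdsWithin 0 (Set.Ioi 0)) with hLdef
  have part1 : Tendsto L (nhdsWithin 0 (Set.Ioo 0 m)) (nhds 0) := by
    rw [Metric.tendsto_nhdsWithin_nhds]
    intro η hη
    have hc : ContinuousWithinAt f (Set.Icc τm τp) 0 := hf 0 ⟨h₁.le, h₂.le⟩
    rw [Metric.continuousWithinAt_iff] at hc
    obtain ⟨δ, hδ0, hδ⟩ := hc (η / 4) (by linarith)
    refine ⟨min δ m, lt_min hδ0 hm0, ?_⟩
    intro ζ hζmem hζd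
    rw [Real.dist_eq, sub_zero, abs_of_pos hζmem.1] at hζd
    have hζ0 : 0 < ζ := hζmem.1
    have hζm : τm < -ζ := by
      have := lt_of_lt_of_le hζmem.2 (min_le_left _ _); linarith
    have hζp : ζ < τp := lt_of_lt_of_le hζmem.2 (min_le_right _ _)
    have hηb : ∀ t ∈ Set.Icc (-ζ) ζ, ‖f t - f 0‖ ≤ η / 4 := by
      intro t ht
      have htm : t ∈ Set.Icc τm τp := ⟨by linarith [ht.1], by linarith [ht.2]⟩
      have hd : dist t 0 < δ := by
        rw [Real.dist_eq, sub_zero]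
        exact lt_of_le_of_lt (abs_le.2 ⟨ht.1, ht.2⟩)
          (lt_of_lt_of_le hζd (min_le_left _ _))
      have := hδ htm hd
      rw [dist_eq_norm] at this; linarith
    have hNt := Ninv_tendsto ζ p hζ0 hp1
    have hev : ∀ᶠ ε in nhdsWithin (0:ℝ) (Set.Ioi 0), g ζ ε ≤ η / 2 := by
      filter_upwards [self_mem_nhdsWithin,
        (hNt.mul_const (M * (ζ ^ 2) ^ (-p) * (τp - τm))).eventually_lt_const
          (by linarith : (0:ℝ) * (M * (ζ ^ 2) ^ (-p) * (τp - τm)) < η / 4)] with ε hε1 hε2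
      have hk := key_est τm τp f hf p hp0 M hM ζ hζ0 hζm hζp (η / 4) hηb ε hε1
      linarith [hk]
    have hnn : ∀ ε : ℝ, 0 ≤ g ζ ε := fun ε => norm_nonneg _
    have hub : L ζ ≤ η / 2 :=
      limsup_le_of_le (isCoboundedUnder_le_of_le _ fun ε => hnn ε) hev
    have hlb : 0 ≤ L ζ :=
      le_limsup_of_frequently_le ((Eventually.of_forall hnn).frequently) ⟨η / 2, eventually_map.2 hev⟩
    rw [Real.dist_eq, sub_zero]
    rw [abs_of_nonneg hlb]
    linarith
  refine ⟨part1, ?_⟩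
  intro hv
  haveI hNB : (nhdsWithin (0:ℝ) (Set.Ioo 0 m)).NeBot := by
    rw [← mem_closure_iff_nhdsWithin_neBot, closure_Ioo hm0.ne]
    exact ⟨le_rfl, hm0.le⟩
  have hLconst : L = fun _ : ℝ => ‖f 0‖ := by
    funext ζ
    have hcongr : ∀ᶠ ε in nhdsWithin (0:ℝ) (Set.Ioi 0), g ζ ε = ‖f 0‖ := by
      filter_upwards [self_mem_nhdsWithin] with ε hε
      simp only [hg]
      rw [hv ε hε, mul_zero, zero_sub, norm_neg]
    rw [hLdef]
    simp only
    rw [limsup_congr hcongr, limsup_const]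
  rw [hLconst] at part1
  have : ‖f 0‖ = 0 := tendsto_nhds_unique tendsto_const_nhds part1
  exact norm_eq_zero.1 this
end

section
/- Let $Y : [a,b] \to \mathbb{C}^{m\times m}$ be a $C^1$ invertible-matrix-valued solution such that $H(t) := \dot{Y}(t) Y(t)^{-1}$ is symmetric with $\dot{H} + H^2 + D = 0$ for a real symmetric continuous $D(t)$. Then the quantity $\det(\Im H(t)) \cdot |\det Y(t)|^2$ is constant in $t$. -/
attribute [local instance] Matrix.normedAddCommGroup Matrix.normedSpace

open Set
open scoped Matrix

/-! The Riccati equation for `H = Y' Y⁻¹` turns into the Jacobi equation `Y'' = -D Y`, and since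
`D` is Hermitian the Wronskian `Y* Y' - Y'* Y` has zero derivative, hence is constant. Writing
`Y' = H Y` with `H` symmetric, the Wronskian equals `Y* (H - H*) Y = 2i Y* (Im H) Y`, whose
determinant is `(2i)^m det(Im H) |det Y|²`. -/

section Calculus

variable {𝕜 : Type*} [RCLike 𝕜] {n : Type*} [Fintype n] [DecidableEq n] {s : Set ℝ} {x : ℝ}

theorem HasDerivWithinAt.matrix_mul {f g : ℝ → Matrix n n 𝕜} {f' g' : Matrix n n 𝕜}
    (hf : HasDerivWithinAt f f' s x) (hg : HasDerivWithinAt g g' s x) :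
    HasDerivWithinAt (fun t => f t * g t) (f' * g x + f x * g') s x := by
  rw [add_comm]
  exact (LinearMap.mul ℝ (Matrix n n 𝕜)).toContinuousBilinearMap.hasDerivWithinAt_of_bilinear hf hg

theorem HasDerivWithinAt.jacobi_of_riccati {Y Y' H H' : ℝ → Matrix n n 𝕜} {A : Matrix n n 𝕜}
    (hY : HasDerivWithinAt Y (Y' x) s x) (hH : HasDerivWithinAt H (H' x) s x)
    (hYH : ∀ t ∈ s, Y' t = H t * Y t) (hx : x ∈ s) (hRic : H' x + H x * H x + A = 0) :
    HasDerivWithinAt Y' (-(A * Y x)) s x := by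
  have hA : A = -(H' x + H x * H x) := eq_neg_of_add_eq_zero_right hRic
  refine (hH.matrix_mul hY).congr hYH (hYH x hx) |>.congr_deriv ?_
  rw [hA, hYH x hx]
  noncomm_ring

def wronskian (Y Y' : Matrix n n 𝕜) : Matrix n n 𝕜 := Yᴴ * Y' - Y'ᴴ * Y

theorem hasDerivWithinAt_wronskian_zero {Y Y' : ℝ → Matrix n n 𝕜} {A : Matrix n n 𝕜}
    (hY : HasDerivWithinAt Y (Y' x) s x) (hY' : HasDerivWithinAt Y' (-(A * Y x)) s x)
    (hA : Aᴴ = A) :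
    HasDerivWithinAt (fun t => wronskian (Y t) (Y' t)) 0 s x := by
  refine (hY.star.matrix_mul hY' |>.sub <| hY'.star.matrix_mul hY).congr_deriv ?_
  simp only [Matrix.star_eq_conjTranspose, Matrix.conjTranspose_neg, Matrix.conjTranspose_mul, hA]
  noncomm_ring

end Calculus

theorem eqOn_Icc_of_hasDerivWithinAt_zero {E : Type*} [NormedAddCommGroup E] [NormedSpace ℝ E]
    {f : ℝ → E} {a b : ℝ} (hf : ∀ t ∈ Icc a b, HasDerivWithinAt f 0 (Icc a b) t) :
    ∀ s ∈ Icc a b, ∀ t ∈ Icc a b, f s = f t := by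
  have hconst := constant_of_has_deriv_right_zero (fun t ht => (hf t ht).continuousWithinAt)
    fun t ht => (hf t (Ico_subset_Icc_self ht)).mono_of_mem_nhdsWithin (Icc_mem_nhdsGE_of_mem ht)
  exact fun s hs t ht => (hconst s hs).trans (hconst t ht).symm

theorem Matrix.conjTranspose_map_ofReal {n : Type*} {D : Matrix n n ℝ} (hD : Dᵀ = D) :
    (D.map Complex.ofReal)ᴴ = D.map Complex.ofReal := by
  rw [← conjTranspose_map _ fun r => (Complex.conj_ofReal r).symm,
    conjTranspose_eq_transpose_of_trivial, hD]

theorem Matrix.sub_conjTranspose_of_transpose_eq {n : Type*} {H : Matrix n n ℂ} (hH : Hᵀ = H) :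
    H - Hᴴ = (2 * Complex.I) • (H.map Complex.im).map Complex.ofReal := by
  ext i j
  have hji : H j i = H i j := congrFun₂ hH i j
  simp only [sub_apply, conjTranspose_apply, smul_apply, map_apply, smul_eq_mul, hji,
    Complex.star_def, Complex.sub_conj]
  push_cast
  ring

theorem det_wronskian_mul_left {n : Type*} [Fintype n] [DecidableEq n] {Y H : Matrix n n ℂ}
    (hH : Hᵀ = H) :
    (wronskian Y (H * Y)).det =
      (2 * Complex.I) ^ Fintype.card n * (((H.map Complex.im).det * ‖Y.det‖ ^ 2 : ℝ) : ℂ) := by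
  have hW : wronskian Y (H * Y) = Yᴴ * (H - Hᴴ) * Y := by
    simp only [wronskian, Matrix.conjTranspose_mul]
    noncomm_ring
  have hnorm : star Y.det * Y.det = (‖Y.det‖ : ℂ) ^ 2 := by
    rw [Complex.star_def, mul_comm, Complex.mul_conj, ← Complex.sq_norm, Complex.ofReal_pow]
  have hdet : ((H.map Complex.im).map Complex.ofReal).det = (H.map Complex.im).det :=
    (RingHom.map_det Complex.ofRealHom _).symm
  rw [hW, Matrix.sub_conjTranspose_of_transpose_eq hH, Matrix.det_mul, Matrix.det_mul,
    Matrix.det_smul, Matrix.det_conjTranspose, hdet]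
  push_cast
  linear_combination (2 * Complex.I) ^ Fintype.card n * ((H.map Complex.im).det : ℂ) * hnorm

theorem stmt_10_general (m : ℕ) (a b : ℝ)
    (D : ℝ → Matrix (Fin m) (Fin m) ℝ)
    (hDsymm : ∀ t ∈ Icc a b, (D t).transpose = D t)
    (Y Y' H' : ℝ → Matrix (Fin m) (Fin m) ℂ)
    (hY : ∀ t ∈ Icc a b, HasDerivWithinAt Y (Y' t) (Icc a b) t)
    (hinv : ∀ t ∈ Icc a b, IsUnit (Y t))
    (hHsymm : ∀ t ∈ Icc a b, (Y' t * (Y t)⁻¹).transpose = Y' t * (Y t)⁻¹)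
    (hH : ∀ t ∈ Icc a b,
      HasDerivWithinAt (fun s => Y' s * (Y s)⁻¹) (H' t) (Icc a b) t)
    (hRic : ∀ t ∈ Icc a b,
      H' t + (Y' t * (Y t)⁻¹) * (Y' t * (Y t)⁻¹) + (D t).map Complex.ofReal = 0) :
    ∀ s ∈ Icc a b, ∀ t ∈ Icc a b,
      ((Y' s * (Y s)⁻¹).map Complex.im).det * ‖(Y s).det‖ ^ 2 =
      ((Y' t * (Y t)⁻¹).map Complex.im).det * ‖(Y t).det‖ ^ 2 := by
  intro s hs t ht
  have hYH : ∀ u ∈ Icc a b, Y' u = Y' u * (Y u)⁻¹ * Y u := fun u hu =>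
    (Matrix.nonsing_inv_mul_cancel_right _ _ ((Y u).isUnit_iff_isUnit_det.mp (hinv u hu))).symm
  have hW : (wronskian (Y s) (Y' s)).det = (wronskian (Y t) (Y' t)).det :=
    congrArg Matrix.det <| eqOn_Icc_of_hasDerivWithinAt_zero (fun u hu =>
      hasDerivWithinAt_wronskian_zero (hY u hu)
        ((hY u hu).jacobi_of_riccati (hH u hu) hYH hu (hRic u hu))
        (Matrix.conjTranspose_map_ofReal (hDsymm u hu))) s hs t ht
  rw [hYH s hs, hYH t ht, det_wronskian_mul_left (hHsymm s hs),
    det_wronskian_mul_left (hHsymm t ht)] at hW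
  exact_mod_cast mul_left_cancel₀ (pow_ne_zero _ (mul_ne_zero two_ne_zero Complex.I_ne_zero)) hW

/-- For an invertible solution `Y` of the Jacobi equation whose logarithmic derivative
`H = Y' Y⁻¹` is symmetric and solves the Riccati equation with real symmetric `D`,
the quantity `det(Im H) * |det Y|²` is constant. -/
theorem stmt_10 (m : ℕ) (a b : ℝ)
    (D : ℝ → Matrix (Fin m) (Fin m) ℝ) (hD : ContinuousOn D (Icc a b))
    (hDsymm : ∀ t ∈ Icc a b, (D t).transpose = D t)
    (Y Y' H' : ℝ → Matrix (Fin m) (Fin m) ℂ)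
    (hY : ∀ t ∈ Icc a b, HasDerivWithinAt Y (Y' t) (Icc a b) t)
    (hinv : ∀ t ∈ Icc a b, IsUnit (Y t))
    (hHsymm : ∀ t ∈ Icc a b, (Y' t * (Y t)⁻¹).transpose = Y' t * (Y t)⁻¹)
    (hH : ∀ t ∈ Icc a b,
      HasDerivWithinAt (fun s => Y' s * (Y s)⁻¹) (H' t) (Icc a b) t)
    (hRic : ∀ t ∈ Icc a b,
      H' t + (Y' t * (Y t)⁻¹) * (Y' t * (Y t)⁻¹) + (D t).map Complex.ofReal = 0) :
    ∀ s ∈ Icc a b, ∀ t ∈ Icc a b,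
      ((Y' s * (Y s)⁻¹).map Complex.im).det * ‖(Y s).det‖ ^ 2 =
      ((Y' t * (Y t)⁻¹).map Complex.im).det * ‖(Y t).det‖ ^ 2 :=
  stmt_10_general m a b D hDsymm Y Y' H' hY hinv hHsymm hH hRic
end

section
/- Let $H_0$ be a complex symmetric $m \times m$ matrix with positive definite imaginary part, and let $D : [a, b] \to \mathbb{R}^{m \times m}$ be continuous symmetric. Let $Y$ solve the linear matrix ODE $\ddot{Y}(t) + D(t) Y(t) = 0$ with $Y(t_0) = Y_0$ invertible and $\dot{Y}(t_0) = H_0 Y_0$ for some $t_0 \in [a,b]$. Then $Y(t)$ is invertible for all $t \in [a, b]$, $H(t) := \dot{Y}(t) Y(t)^{-1}$ is symmetric, and $\Im H(t)$ is positive definite for all $t \in [a, b]$. -/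
attribute [local instance] Matrix.normedAddCommGroup Matrix.normedSpace

open Set

open Finset Matrix ComplexConjugate in
private lemma sum_symm_swap {m : ℕ} (S : Matrix (Fin m) (Fin m) ℂ) (hsym : S.transpose = S)
    (u v : Fin m → ℂ) :
    ∑ i, v i * (S *ᵥ u) i = ∑ i, (S *ᵥ v) i * u i := by
  simp only [Matrix.mulVec, dotProduct, Finset.mul_sum, Finset.sum_mul]
  rw [Finset.sum_comm]
  refine Finset.sum_congr rfl fun j _ => Finset.sum_congr rfl fun i _ => ?_
  have h : S j i = S i j := congrFun (congrFun hsym i) j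
  rw [h]; ring

open Finset Matrix in
private lemma deriv_cancel {m : ℕ} (S : Matrix (Fin m) (Fin m) ℂ) (hsym : S.transpose = S)
    (u v A : Fin m → ℂ) :
    (∑ i, (A i + v i * (-(S *ᵥ u)) i) - ∑ i, ((-(S *ᵥ v)) i * u i + A i)) = 0 := by
  have h := sum_symm_swap S hsym u v
  simp only [Pi.neg_apply, Finset.sum_add_distrib, mul_neg, neg_mul,
    Finset.sum_neg_distrib]
  linear_combination -h

private lemma const_of_hasDerivWithinAt_zero {a b : ℝ} {f : ℝ → ℂ}
    (hf : ∀ t ∈ Icc a b, HasDerivWithinAt f 0 (Icc a b) t)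
    {s t : ℝ} (hs : s ∈ Icc a b) (ht : t ∈ Icc a b) : f s = f t := by
  have h := (convex_Icc a b).norm_image_sub_le_of_norm_hasDerivWithin_le
      (f' := fun _ => (0 : ℂ)) (C := 0) hf (fun x _ => by simp) ht hs
  rw [zero_mul] at h
  exact sub_eq_zero.mp (norm_le_zero_iff.mp h)

open Finset Matrix ComplexConjugate in
private lemma posdef_complex {m : ℕ} (M : Matrix (Fin m) (Fin m) ℝ) (hM : M.PosDef)
    (v : Fin m → ℂ) (hv : v ≠ 0) :
    0 < (∑ i, conj (v i) * ((M.map Complex.ofReal) *ᵥ v) i).re := by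
  set r : Fin m → ℝ := fun i => (v i).re with hr
  set s : Fin m → ℝ := fun i => (v i).im with hs
  have key : (∑ i, conj (v i) * ((M.map Complex.ofReal) *ᵥ v) i).re
      = r ⬝ᵥ (M *ᵥ r) + s ⬝ᵥ (M *ᵥ s) := by
    simp only [Matrix.mulVec, dotProduct, Matrix.map_apply, Finset.mul_sum,
      Complex.re_sum, Finset.sum_mul]
    rw [← Finset.sum_add_distrib]
    refine Finset.sum_congr rfl fun i _ => ?_
    rw [← Finset.sum_add_distrib]
    refine Finset.sum_congr rfl fun j _ => ?_
    simp [Complex.mul_re, Complex.mul_im, Complex.conj_re, Complex.conj_im]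
    rfl
  rw [key]
  have hrs : r ≠ 0 ∨ s ≠ 0 := by
    by_contra h
    push_neg at h
    apply hv
    funext i
    exact Complex.ext (congrFun h.1 i) (congrFun h.2 i)
  have hsd := hM.posSemidef
  rcases hrs with h | h
  · have h1 : 0 < r ⬝ᵥ (M *ᵥ r) := by simpa using hM.dotProduct_mulVec_pos h
    have h2 : 0 ≤ s ⬝ᵥ (M *ᵥ s) := by simpa using hsd.dotProduct_mulVec_nonneg s
    linarith
  · have h1 : 0 ≤ r ⬝ᵥ (M *ᵥ r) := by simpa using hsd.dotProduct_mulVec_nonneg r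
    have h2 : 0 < s ⬝ᵥ (M *ᵥ s) := by simpa using hM.dotProduct_mulVec_pos h
    linarith

open Finset Matrix ComplexConjugate in
private lemma im_quadform {m : ℕ} (S : Matrix (Fin m) (Fin m) ℂ) (hS : S.transpose = S)
    (v : Fin m → ℂ) :
    (∑ i, conj (v i) * (S *ᵥ v) i).im
      = (∑ i, conj (v i) * (((S.map Complex.im).map Complex.ofReal) *ᵥ v) i).re := by
  simp only [Matrix.mulVec, dotProduct, Matrix.map_apply, Finset.mul_sum,
    Complex.re_sum, Complex.im_sum]
  have expand : ∀ i j, (conj (v i) * (S i j * v j)).im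
      = (S i j).re * (conj (v i) * v j).im
        + (S i j).im * (conj (v i) * v j).re := by
    intro i j
    simp [Complex.mul_im, Complex.mul_re]
    ring
  have expand2 : ∀ i j, (conj (v i) * (((S i j).im : ℂ) * v j)).re
      = (S i j).im * (conj (v i) * v j).re := by
    intro i j
    simp [Complex.mul_re, Complex.mul_im]
    ring
  simp only [expand, expand2, Finset.sum_add_distrib]
  have hzero : ∑ i, ∑ j, (S i j).re * (conj (v i) * v j).im = 0 := by
    have hneg : ∑ i, ∑ j, (S i j).re * (conj (v i) * v j).im
        = -∑ i, ∑ j, (S i j).re * (conj (v i) * v j).im := by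
      conv_lhs => rw [Finset.sum_comm]
      rw [← Finset.sum_neg_distrib]
      refine Finset.sum_congr rfl fun i _ => ?_
      rw [← Finset.sum_neg_distrib]
      refine Finset.sum_congr rfl fun j _ => ?_
      have h1 : S j i = S i j := congrFun (congrFun hS i) j
      have h2 : (conj (v j) * v i).im = -(conj (v i) * v j).im := by
        simp [Complex.mul_im, Complex.conj_re, Complex.conj_im]; ring
      rw [h1, h2]; ring
    linarith
  rw [hzero, zero_add]

open Finset Matrix ComplexConjugate in
private lemma conj_mulVec_real {m : ℕ} (Dm : Matrix (Fin m) (Fin m) ℝ) (u : Fin m → ℂ)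
    (i : Fin m) :
    conj ((Dm.map Complex.ofReal *ᵥ u) i) = (Dm.map Complex.ofReal *ᵥ fun j => conj (u j)) i := by
  simp only [Matrix.mulVec, dotProduct, Matrix.map_apply, map_sum, _root_.map_mul,
    Complex.conj_ofReal]

open Finset Matrix ComplexConjugate in
/-- Global solvability of the matrix Riccati equation along the Jacobi equation:
if `Y'' + D Y = 0` with `Y(t₀)` invertible and `Y'(t₀) = H₀ Y(t₀)` for a symmetric `H₀`
with positive definite imaginary part, then `Y(t)` is invertible for all `t`,
`H = Y' Y⁻¹` is symmetric, and `Im H(t)` is positive definite for all `t`. -/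
theorem stmt_18 (m : ℕ) (a b t₀ : ℝ) (ht₀ : t₀ ∈ Icc a b)
    (H₀ Y₀ : Matrix (Fin m) (Fin m) ℂ)
    (hH₀symm : H₀.transpose = H₀) (hH₀im : (H₀.map Complex.im).PosDef)
    (D : ℝ → Matrix (Fin m) (Fin m) ℝ)
    (hD : ∀ i j : Fin m, ContinuousOn (fun t => D t i j) (Icc a b))
    (hDsymm : ∀ t ∈ Icc a b, (D t).transpose = D t)
    (Y Y' : ℝ → Matrix (Fin m) (Fin m) ℂ)
    (hY : ∀ t ∈ Icc a b, HasDerivWithinAt Y (Y' t) (Icc a b) t)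
    (hY' : ∀ t ∈ Icc a b,
      HasDerivWithinAt Y' (-((D t).map Complex.ofReal * Y t)) (Icc a b) t)
    (hY₀ : Y t₀ = Y₀) (hY₀inv : IsUnit Y₀) (hY'₀ : Y' t₀ = H₀ * Y₀) :
    ∀ t ∈ Icc a b, IsUnit (Y t) ∧
      (Y' t * (Y t)⁻¹).transpose = Y' t * (Y t)⁻¹ ∧
      ((Y' t * (Y t)⁻¹).map Complex.im).PosDef := by
  classical
  -- symmetry of the mapped coefficient matrix
  have hDcsymm : ∀ t ∈ Icc a b, ((D t).map Complex.ofReal).transpose = (D t).map Complex.ofReal := by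
    intro t ht
    rw [← Matrix.transpose_map, hDsymm t ht]
  -- entrywise derivatives
  have hYe : ∀ (i j : Fin m), ∀ t ∈ Icc a b,
      HasDerivWithinAt (fun τ => Y τ i j) (Y' t i j) (Icc a b) t :=
    fun i j t ht => hasDerivWithinAt_pi.mp (hasDerivWithinAt_pi.mp (hY t ht) i) j
  have hY'e : ∀ (i j : Fin m), ∀ t ∈ Icc a b,
      HasDerivWithinAt (fun τ => Y' τ i j) ((-((D t).map Complex.ofReal * Y t)) i j) (Icc a b) t :=
    fun i j t ht => hasDerivWithinAt_pi.mp (hasDerivWithinAt_pi.mp (hY' t ht) i) j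
  -- derivatives of matrix-vector products
  have hYv : ∀ (p : Fin m → ℂ) (i : Fin m), ∀ t ∈ Icc a b,
      HasDerivWithinAt (fun τ => (Y τ *ᵥ p) i) ((Y' t *ᵥ p) i) (Icc a b) t := by
    intro p i t ht
    show HasDerivWithinAt (fun τ => ∑ j, Y τ i j * p j) (∑ j, Y' t i j * p j) (Icc a b) t
    exact HasDerivWithinAt.fun_sum fun j _ => (hYe i j t ht).mul_const (p j)
  have hY'v : ∀ (p : Fin m → ℂ) (i : Fin m), ∀ t ∈ Icc a b,
      HasDerivWithinAt (fun τ => (Y' τ *ᵥ p) i)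
        (((-((D t).map Complex.ofReal * Y t)) *ᵥ p) i) (Icc a b) t := by
    intro p i t ht
    show HasDerivWithinAt (fun τ => ∑ j, Y' τ i j * p j)
      (∑ j, (-((D t).map Complex.ofReal * Y t)) i j * p j) (Icc a b) t
    exact HasDerivWithinAt.fun_sum fun j _ => (hY'e i j t ht).mul_const (p j)
  -- rewriting the second derivative
  have hw : ∀ (p : Fin m → ℂ), ∀ t ∈ Icc a b,
      (-((D t).map Complex.ofReal * Y t)) *ᵥ p
        = -((D t).map Complex.ofReal *ᵥ (Y t *ᵥ p)) := by
    intro p t ht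
    rw [Matrix.neg_mulVec, Matrix.mulVec_mulVec]
  -- constancy of the bilinear Wronskian (no conjugation)
  have hω : ∀ (p q : Fin m → ℂ), ∀ t ∈ Icc a b,
      (∑ i, (Y t *ᵥ p) i * (Y' t *ᵥ q) i - ∑ i, (Y' t *ᵥ p) i * (Y t *ᵥ q) i)
        = (∑ i, (Y₀ *ᵥ p) i * ((H₀ * Y₀) *ᵥ q) i
            - ∑ i, ((H₀ * Y₀) *ᵥ p) i * (Y₀ *ᵥ q) i) := by
    intro p q t ht
    have hconst := const_of_hasDerivWithinAt_zero
      (f := fun τ => ∑ i, (Y τ *ᵥ p) i * (Y' τ *ᵥ q) i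
        - ∑ i, (Y' τ *ᵥ p) i * (Y τ *ᵥ q) i) ?_ ht ht₀
    · simpa [hY₀, hY'₀] using hconst
    intro s hs
    have h1 : HasDerivWithinAt (fun τ => ∑ i, (Y τ *ᵥ p) i * (Y' τ *ᵥ q) i)
        (∑ i, ((Y' s *ᵥ p) i * (Y' s *ᵥ q) i
          + (Y s *ᵥ p) i * ((-((D s).map Complex.ofReal * Y s)) *ᵥ q) i)) (Icc a b) s :=
      HasDerivWithinAt.fun_sum fun i _ => (hYv p i s hs).mul (hY'v q i s hs)
    have h2 : HasDerivWithinAt (fun τ => ∑ i, (Y' τ *ᵥ p) i * (Y τ *ᵥ q) i)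
        (∑ i, (((-((D s).map Complex.ofReal * Y s)) *ᵥ p) i * (Y s *ᵥ q) i
          + (Y' s *ᵥ p) i * (Y' s *ᵥ q) i)) (Icc a b) s :=
      HasDerivWithinAt.fun_sum fun i _ => (hY'v p i s hs).mul (hYv q i s hs)
    have h3 := h1.sub h2
    have hzero : (∑ i, ((Y' s *ᵥ p) i * (Y' s *ᵥ q) i
          + (Y s *ᵥ p) i * ((-((D s).map Complex.ofReal * Y s)) *ᵥ q) i)
        - ∑ i, (((-((D s).map Complex.ofReal * Y s)) *ᵥ p) i * (Y s *ᵥ q) i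
          + (Y' s *ᵥ p) i * (Y' s *ᵥ q) i)) = 0 := by
      rw [hw p s hs, hw q s hs]
      exact deriv_cancel ((D s).map Complex.ofReal) (hDcsymm s hs)
        (Y s *ᵥ q) (Y s *ᵥ p) (fun i => (Y' s *ᵥ p) i * (Y' s *ᵥ q) i)
    exact hzero ▸ h3
  -- constancy of the sesquilinear Wronskian
  have hβ : ∀ (p : Fin m → ℂ), ∀ t ∈ Icc a b,
      (∑ i, conj ((Y t *ᵥ p) i) * (Y' t *ᵥ p) i
        - ∑ i, conj ((Y' t *ᵥ p) i) * (Y t *ᵥ p) i)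
        = (∑ i, conj ((Y₀ *ᵥ p) i) * ((H₀ * Y₀) *ᵥ p) i
            - ∑ i, conj (((H₀ * Y₀) *ᵥ p) i) * (Y₀ *ᵥ p) i) := by
    intro p t ht
    have hconst := const_of_hasDerivWithinAt_zero
      (f := fun τ => ∑ i, conj ((Y τ *ᵥ p) i) * (Y' τ *ᵥ p) i
        - ∑ i, conj ((Y' τ *ᵥ p) i) * (Y τ *ᵥ p) i) ?_ ht ht₀
    · simpa [hY₀, hY'₀] using hconst
    intro s hs
    have h1 : HasDerivWithinAt (fun τ => ∑ i, conj ((Y τ *ᵥ p) i) * (Y' τ *ᵥ p) i)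
        (∑ i, (conj ((Y' s *ᵥ p) i) * (Y' s *ᵥ p) i
          + conj ((Y s *ᵥ p) i) * ((-((D s).map Complex.ofReal * Y s)) *ᵥ p) i)) (Icc a b) s := by
      refine HasDerivWithinAt.fun_sum fun i _ => ?_
      have ha := (hYv p i s hs).star
      simp only [Complex.star_def] at ha
      exact ha.mul (hY'v p i s hs)
    have h2 : HasDerivWithinAt (fun τ => ∑ i, conj ((Y' τ *ᵥ p) i) * (Y τ *ᵥ p) i)
        (∑ i, (conj (((-((D s).map Complex.ofReal * Y s)) *ᵥ p) i) * (Y s *ᵥ p) i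
          + conj ((Y' s *ᵥ p) i) * (Y' s *ᵥ p) i)) (Icc a b) s := by
      refine HasDerivWithinAt.fun_sum fun i _ => ?_
      have ha := (hY'v p i s hs).star
      simp only [Complex.star_def] at ha
      exact ha.mul (hYv p i s hs)
    have h3 := h1.sub h2
    have hcj : ∀ i, conj ((-((D s).map Complex.ofReal *ᵥ (Y s *ᵥ p))) i)
        = (-((D s).map Complex.ofReal *ᵥ fun j => conj ((Y s *ᵥ p) j))) i := by
      intro i
      simp only [Pi.neg_apply, map_neg, conj_mulVec_real]
    have hzero : (∑ i, (conj ((Y' s *ᵥ p) i) * (Y' s *ᵥ p) i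
          + conj ((Y s *ᵥ p) i) * ((-((D s).map Complex.ofReal * Y s)) *ᵥ p) i)
        - ∑ i, (conj (((-((D s).map Complex.ofReal * Y s)) *ᵥ p) i) * (Y s *ᵥ p) i
          + conj ((Y' s *ᵥ p) i) * (Y' s *ᵥ p) i)) = 0 := by
      simp only [hw p s hs, hcj]
      exact deriv_cancel ((D s).map Complex.ofReal) (hDcsymm s hs)
        (Y s *ᵥ p) (fun j => conj ((Y s *ᵥ p) j))
        (fun i => conj ((Y' s *ᵥ p) i) * (Y' s *ᵥ p) i)
    exact hzero ▸ h3
  -- value of the sesquilinear Wronskian at `t₀`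
  have hβval : ∀ (p : Fin m → ℂ), p ≠ 0 →
      ∃ c : ℝ, 0 < c ∧
        (∑ i, conj ((Y₀ *ᵥ p) i) * ((H₀ * Y₀) *ᵥ p) i
          - ∑ i, conj (((H₀ * Y₀) *ᵥ p) i) * (Y₀ *ᵥ p) i) = (c : ℂ) * Complex.I := by
    intro p hp
    set v : Fin m → ℂ := Y₀ *ᵥ p with hv
    have hv0 : v ≠ 0 := by
      intro h
      apply hp
      have h2 : Y₀⁻¹ *ᵥ (Y₀ *ᵥ p) = Y₀⁻¹ *ᵥ 0 := by rw [← hv, h]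
      rwa [Matrix.mulVec_mulVec, Matrix.nonsing_inv_mul Y₀
        ((Matrix.isUnit_iff_isUnit_det Y₀).mp hY₀inv), Matrix.one_mulVec,
        Matrix.mulVec_zero] at h2
    set z : ℂ := ∑ i, conj (v i) * (H₀ *ᵥ v) i with hz
    have hmv : (H₀ * Y₀) *ᵥ p = H₀ *ᵥ v := by rw [← Matrix.mulVec_mulVec]
    have hconjsum : ∑ i, conj ((H₀ *ᵥ v) i) * v i = conj z := by
      rw [hz, map_sum]
      exact Finset.sum_congr rfl fun i _ => by
        simp only [_root_.map_mul, Complex.conj_conj]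
        ring
    have heq : (∑ i, conj ((Y₀ *ᵥ p) i) * ((H₀ * Y₀) *ᵥ p) i
        - ∑ i, conj (((H₀ * Y₀) *ᵥ p) i) * (Y₀ *ᵥ p) i) = z - conj z := by
      rw [hmv, ← hv, hconjsum, hz]
    have him : 0 < z.im := by
      rw [hz, im_quadform H₀ hH₀symm v]
      exact posdef_complex (H₀.map Complex.im) hH₀im v hv0
    refine ⟨2 * z.im, by linarith, ?_⟩
    rw [heq, Complex.sub_conj]
  -- now prove the goals at each time t
  intro t ht
  -- invertibility
  have hunit : IsUnit (Y t) := by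
    rw [Matrix.isUnit_iff_isUnit_det, isUnit_iff_ne_zero]
    intro hdet
    obtain ⟨p, hp, hp0⟩ := Matrix.exists_mulVec_eq_zero_iff.mpr hdet
    obtain ⟨c, hc, hcv⟩ := hβval p hp
    have h0 := hβ p t ht
    rw [hp0, hcv] at h0
    simp only [Pi.zero_apply, map_zero, zero_mul, mul_zero, Finset.sum_const_zero,
      sub_zero, sub_self] at h0
    have : (0 : ℂ).im = ((c : ℂ) * Complex.I).im := by rw [h0]
    simp at this
    linarith
  have hdet : IsUnit (Y t).det := (Matrix.isUnit_iff_isUnit_det (Y t)).mp hunit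
  -- symmetry of H = Y' Y⁻¹
  have hmat : (Y t).transpose * Y' t = (Y' t).transpose * Y t := by
    ext i j
    have h := hω (Pi.single i 1) (Pi.single j 1) t ht
    have h0 : (∑ k, (Y₀ *ᵥ Pi.single i 1) k * ((H₀ * Y₀) *ᵥ Pi.single j 1) k
        - ∑ k, ((H₀ * Y₀) *ᵥ Pi.single i 1) k * (Y₀ *ᵥ Pi.single j 1) k) = 0 := by
      have hmvi : (H₀ * Y₀) *ᵥ Pi.single i 1 = H₀ *ᵥ (Y₀ *ᵥ Pi.single i 1) := by
        rw [← Matrix.mulVec_mulVec]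
      have hmvj : (H₀ * Y₀) *ᵥ Pi.single j 1 = H₀ *ᵥ (Y₀ *ᵥ Pi.single j 1) := by
        rw [← Matrix.mulVec_mulVec]
      rw [hmvi, hmvj, sum_symm_swap H₀ hH₀symm (Y₀ *ᵥ Pi.single j 1) (Y₀ *ᵥ Pi.single i 1),
        sub_self]
    rw [h0] at h
    have h' : ∑ k, (Y t *ᵥ Pi.single i 1) k * (Y' t *ᵥ Pi.single j 1) k
        = ∑ k, (Y' t *ᵥ Pi.single i 1) k * (Y t *ᵥ Pi.single j 1) k := by
      linear_combination h
    simp only [Matrix.mulVec_single, mul_one] at h'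
    simpa [Matrix.mul_apply, Matrix.transpose_apply] using h'
  have hsymH : (Y' t * (Y t)⁻¹).transpose = Y' t * (Y t)⁻¹ := by
    have hdetT : IsUnit ((Y t).transpose).det := by
      rw [Matrix.det_transpose]; exact hdet
    rw [Matrix.transpose_mul, Matrix.transpose_nonsing_inv]
    have h2 : (Y' t).transpose = (Y t).transpose * (Y' t * (Y t)⁻¹) := by
      have h3 := congrArg (fun M => M * (Y t)⁻¹) hmat
      simp only [Matrix.mul_assoc] at h3
      rw [Matrix.mul_nonsing_inv (Y t) hdet] at h3
      simp only [Matrix.mul_one] at h3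
      exact h3.symm
    rw [h2, ← Matrix.mul_assoc, Matrix.nonsing_inv_mul _ hdetT, Matrix.one_mul]
  refine ⟨hunit, hsymH, Matrix.PosDef.of_dotProduct_mulVec_pos ?_ ?_⟩
  -- Hermitian part of posdef
  · show ((Y' t * (Y t)⁻¹).map Complex.im).conjTranspose = (Y' t * (Y t)⁻¹).map Complex.im
    ext i j
    have h := congrFun (congrFun hsymH i) j
    simp only [Matrix.conjTranspose_apply, Matrix.map_apply, star_trivial]
    exact congrArg Complex.im h
  -- positivity
  · intro x hx
    set xc : Fin m → ℂ := fun i => (x i : ℂ) with hxc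
    have hxc0 : xc ≠ 0 := by
      intro h
      apply hx
      funext i
      have h2 : (x i : ℂ) = 0 := by simpa [hxc] using congrFun h i
      exact_mod_cast h2
    set p : Fin m → ℂ := (Y t)⁻¹ *ᵥ xc with hpdef
    have hYp : Y t *ᵥ p = xc := by
      rw [hpdef, Matrix.mulVec_mulVec, Matrix.mul_nonsing_inv (Y t) hdet, Matrix.one_mulVec]
    have hp0 : p ≠ 0 := by
      intro h
      apply hxc0
      rw [← hYp, h, Matrix.mulVec_zero]
    have hY'p : Y' t *ᵥ p = (Y' t * (Y t)⁻¹) *ᵥ xc := by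
      rw [hpdef, Matrix.mulVec_mulVec]
    set z : ℂ := ∑ i, conj (xc i) * ((Y' t * (Y t)⁻¹) *ᵥ xc) i with hz
    have hconjsum : ∑ i, conj (((Y' t * (Y t)⁻¹) *ᵥ xc) i) * xc i = conj z := by
      rw [hz, map_sum]
      exact Finset.sum_congr rfl fun i _ => by
        simp only [_root_.map_mul, Complex.conj_conj]
        ring
    have hβt : (∑ i, conj ((Y t *ᵥ p) i) * (Y' t *ᵥ p) i
        - ∑ i, conj ((Y' t *ᵥ p) i) * (Y t *ᵥ p) i) = z - conj z := by
      rw [hYp, hY'p, hconjsum, hz]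
    obtain ⟨c, hc, hcv⟩ := hβval p hp0
    have heq := hβ p t ht
    rw [hβt, hcv] at heq
    have him : z.im = c / 2 := by
      have h1 := congrArg Complex.im heq
      rw [Complex.sub_conj] at h1
      simp at h1
      linarith
    have hgoal : star x ⬝ᵥ (((Y' t * (Y t)⁻¹).map Complex.im) *ᵥ x) = z.im := by
      have hstar : star x = x := funext fun i => star_trivial _
      rw [hstar, hz]
      simp only [dotProduct, Matrix.mulVec, Matrix.map_apply, Finset.mul_sum,
        Complex.im_sum]
      refine Finset.sum_congr rfl fun i _ => Finset.sum_congr rfl fun j _ => ?_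
      simp only [hxc, Complex.conj_ofReal]
      simp [Complex.mul_im, Complex.mul_re, Complex.ofReal_re, Complex.ofReal_im]
    rw [hgoal, him]
    linarith
end
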